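/- arXiv:2305.16984 — 6 statements merged into one kernel-verified Lean document; each statement's English description precedes it below -/
import Mathlib

section
/- Let κ ∈ (0,∞] and let φ : (0,κ) → ℝ be strictly increasing and convex. Define the extension of the inverse φ̂⁻¹ : (inf φ, ∞) → ℝ by φ̂⁻¹(s) = φ⁻¹(s) for s in the image of φ, and φ̂⁻¹(s) = κ for s ≥ sup φ (this case only occurs when κ < ∞). Then for all r, r̃ ∈ (0,κ) and all v ≥ 0, one has |φ̂⁻¹(φ(r) + v) − φ̂⁻¹(φ(r̃) + v)| ≤ |r − r̃|. -/
open Set Filter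

theorem stmt_1 (κ : EReal) (hκ : 0 < κ) (φ : ℝ → ℝ) (D : Set ℝ)
    (hD : D = {r : ℝ | 0 < r ∧ (r : EReal) < κ})
    (hmono : StrictMonoOn φ D) (hconv : ConvexOn ℝ D φ)
    (ψ : ℝ → ℝ)
    (hψ_inv : ∀ r ∈ D, ψ (φ r) = r)
    (hψ_top : ∀ s : ℝ, sSup (Real.toEReal '' (φ '' D)) ≤ (s : EReal) →
      (ψ s : EReal) = κ) :
    ∀ r ∈ D, ∀ r' ∈ D, ∀ v : ℝ, 0 ≤ v →
      |ψ (φ r + v) - ψ (φ r' + v)| ≤ |r - r'| := by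
  set S := sSup (Real.toEReal '' (φ '' D)) with hS
  -- D is order connected
  have hDord : ∀ x ∈ D, ∀ y ∈ D, ∀ z : ℝ, x ≤ z → z ≤ y → z ∈ D := by
    intro x hx y hy z hxz hzy
    rw [hD] at hx hy ⊢
    exact ⟨lt_of_lt_of_le hx.1 hxz,
      lt_of_le_of_lt (EReal.coe_le_coe_iff.2 hzy) hy.2⟩
  -- D is open
  have hopen : IsOpen D := by
    rw [hD]
    have : {r : ℝ | 0 < r ∧ (r : EReal) < κ} =
        Ioi (0:ℝ) ∩ (Real.toEReal ⁻¹' Iio κ) := by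
      ext r
      simp only [Set.mem_setOf_eq, Set.mem_inter_iff, Set.mem_Ioi, Set.mem_preimage,
        Set.mem_Iio]
    rw [this]
    exact isOpen_Ioi.inter (isOpen_Iio.preimage continuous_coe_real_ereal)
  have hcont : ContinuousOn φ D := hconv.continuousOn hopen
  -- mono (≤ version)
  have hmono' : ∀ x ∈ D, ∀ y ∈ D, x ≤ y → φ x ≤ φ y := by
    intro x hx y hy hxy
    rcases eq_or_lt_of_le hxy with rfl | h
    · exact le_rfl
    · exact (hmono hx hy h).le
  -- increment inequality from convexity
  have hinc : ∀ x ∈ D, ∀ y ∈ D, x ≤ y → ∀ δ : ℝ, 0 ≤ δ → y + δ ∈ D →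
      φ (x + δ) - φ x ≤ φ (y + δ) - φ y := by
    intro x hx y hy hxy δ hδ hyδ
    have hxδ : x + δ ∈ D := hDord x hx (y+δ) hyδ _ (by linarith) (by linarith)
    rcases eq_or_lt_of_le hδ with rfl | hδ'
    · simp
    rcases eq_or_lt_of_le hxy with rfl | hxy'
    · simp
    have h1 : (φ (x+δ) - φ x) / (x + δ - x) ≤ (φ (y+δ) - φ x) / (y + δ - x) :=
      hconv.secant_mono hx hxδ hyδ (by intro h; linarith) (by intro h; nlinarith) (by linarith)
    have h2 : (φ x - φ (y+δ)) / (x - (y + δ)) ≤ (φ y - φ (y+δ)) / (y - (y + δ)) :=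
      hconv.secant_mono hyδ hx hy (by intro h; nlinarith) (by intro h; nlinarith) (by linarith)
    have e1 : (φ x - φ (y+δ)) / (x - (y + δ)) = (φ (y+δ) - φ x) / (y + δ - x) := by
      rw [← neg_div_neg_eq]; ring_nf
    have e2 : (φ y - φ (y+δ)) / (y - (y + δ)) = (φ (y+δ) - φ y) / δ := by
      rw [← neg_div_neg_eq]; ring_nf
    rw [e1, e2] at h2
    have h3 : (φ (x+δ) - φ x) / δ ≤ (φ (y+δ) - φ y) / δ := by
      have : x + δ - x = δ := by ring
      rw [this] at h1
      exact h1.trans h2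
    exact (div_le_div_iff_of_pos_right hδ').1 h3
  -- existence of preimages below the sup
  have hexist : ∀ x ∈ D, ∀ v : ℝ, 0 ≤ v → ((φ x + v : ℝ) : EReal) < S →
      ∃ b ∈ D, x ≤ b ∧ φ b = φ x + v := by
    intro x hx v hv hlt
    obtain ⟨e, he, hlte⟩ := lt_sSup_iff.1 hlt
    obtain ⟨w, hw, rfl⟩ := he
    obtain ⟨c, hc, rfl⟩ := hw
    have hφ : φ x + v < φ c := EReal.coe_lt_coe_iff.1 hlte
    have hxc : x < c := by
      by_contra h
      push_neg at h
      have := hmono' c hc x hx h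
      linarith
    have hcont' : ContinuousOn φ (Icc x c) := hcont.mono (by
      intro z hz; exact hDord x hx c hc z hz.1 hz.2)
    have : φ x + v ∈ Icc (φ x) (φ c) := ⟨by linarith, hφ.le⟩
    obtain ⟨b, hb, hbeq⟩ := intermediate_value_Icc hxc.le hcont' this
    exact ⟨b, hDord x hx c hc b hb.1 hb.2, hb.1, hbeq⟩
  -- key one-sided statement
  have key : ∀ r ∈ D, ∀ r' ∈ D, r' ≤ r → ∀ v : ℝ, 0 ≤ v →
      ψ (φ r' + v) ≤ ψ (φ r + v) ∧ ψ (φ r + v) ≤ ψ (φ r' + v) + (r - r') := by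
    intro r hr r' hr' hrr v hv
    have hφrr : φ r' ≤ φ r := hmono' r' hr' r hr hrr
    by_cases hB : ((φ r + v : ℝ) : EReal) < S
    · -- both below sup
      have hB' : ((φ r' + v : ℝ) : EReal) < S :=
        lt_of_le_of_lt (EReal.coe_le_coe_iff.2 (by linarith)) hB
      obtain ⟨a, ha, hra, haeq⟩ := hexist r hr v hv hB
      obtain ⟨b, hb, hrb, hbeq⟩ := hexist r' hr' v hv hB'
      have hψa : ψ (φ r + v) = a := by rw [← haeq, hψ_inv a ha]
      have hψb : ψ (φ r' + v) = b := by rw [← hbeq, hψ_inv b hb]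
      rw [hψa, hψb]
      constructor
      · by_contra h
        push_neg at h
        have := hmono ha hb h
        rw [haeq, hbeq] at this
        linarith
      · by_contra h
        push_neg at h
        have hcD : b + (r - r') ∈ D :=
          hDord b hb a ha _ (by linarith) (by linarith)
        have hincr := hinc r' hr' b hb hrb (r - r') (by linarith) hcD
        have : r' + (r - r') = r := by ring
        rw [this] at hincr
        have hlt : b + (r - r') < a := by linarith
        have := hmono hcD ha hlt
        rw [haeq, hbeq] at *
        linarith
    · push_neg at hB
      have hκa := hψ_top (φ r + v) hB
      by_cases hC : ((φ r' + v : ℝ) : EReal) < S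
      · -- r' below sup, r above: ψ(φ r + v) corresponds to κ
        obtain ⟨b, hb, hrb, hbeq⟩ := hexist r' hr' v hv hC
        have hψb : ψ (φ r' + v) = b := by rw [← hbeq, hψ_inv b hb]
        set a := ψ (φ r + v) with haa
        have hκcoe : κ = ((a : ℝ) : EReal) := hκa.symm
        have hbD := hb
        rw [hD] at hbD
        have hba : b < a := by
          have := hbD.2
          rw [hκcoe] at this
          exact EReal.coe_lt_coe_iff.1 this
        rw [hψb]
        refine ⟨hba.le, ?_⟩
        by_contra h
        push_neg at h
        have hcD : b + (r - r') ∈ D := by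
          rw [hD]
          constructor
          · have := hbD.1; linarith
          · rw [hκcoe]
            exact EReal.coe_lt_coe_iff.2 (by linarith)
        have hincr := hinc r' hr' b hb hrb (r - r') (by linarith) hcD
        have heq : r' + (r - r') = r := by ring
        rw [heq] at hincr
        -- φ (b + (r-r')) ≥ φ r + v, but also < S ≤ φ r + v
        have hge : φ r + v ≤ φ (b + (r - r')) := by
          rw [hbeq] at hincr; linarith
        set c := b + (r - r') with hc
        have hcD' := hcD
        rw [hD] at hcD'
        have hca : c < a := by
          have := hcD'.2
          rw [hκcoe] at this
          exact EReal.coe_lt_coe_iff.1 this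
        set c' := (c + a) / 2 with hc'
        have hcc' : c < c' := by simp only [hc']; linarith
        have hc'D : c' ∈ D := by
          rw [hD]
          refine ⟨by simp only [hc']; nlinarith [hcD'.1], ?_⟩
          rw [hκcoe]
          exact EReal.coe_lt_coe_iff.2 (by simp only [hc']; linarith)
        have h1 : φ c < φ c' := hmono hcD hc'D hcc'
        have h2 : ((φ c' : ℝ) : EReal) ≤ S := le_sSup ⟨φ c', ⟨c', hc'D, rfl⟩, rfl⟩
        have h3 : ((φ c' : ℝ) : EReal) ≤ ((φ r + v : ℝ) : EReal) := h2.trans hB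
        have h4 : φ c' ≤ φ r + v := EReal.coe_le_coe_iff.1 h3
        linarith
      · -- both at least sup
        push_neg at hC
        have hκb := hψ_top (φ r' + v) hC
        have : ((ψ (φ r + v) : ℝ) : EReal) = ((ψ (φ r' + v) : ℝ) : EReal) := by
          rw [hκa, hκb]
        have heq : ψ (φ r + v) = ψ (φ r' + v) := EReal.coe_eq_coe_iff.1 this
        rw [heq]
        exact ⟨le_rfl, by linarith⟩
  intro r hr r' hr' v hv
  rcases le_total r' r with h | h
  · obtain ⟨h1, h2⟩ := key r hr r' hr' h v hv
    rw [abs_sub_le_iff]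
    constructor
    · calc ψ (φ r + v) - ψ (φ r' + v) ≤ r - r' := by linarith
        _ ≤ |r - r'| := le_abs_self _
    · calc ψ (φ r' + v) - ψ (φ r + v) ≤ 0 := by linarith
        _ ≤ |r - r'| := abs_nonneg _
  · obtain ⟨h1, h2⟩ := key r' hr' r hr h v hv
    rw [abs_sub_le_iff]
    constructor
    · calc ψ (φ r + v) - ψ (φ r' + v) ≤ 0 := by linarith
        _ ≤ |r - r'| := abs_nonneg _
    · calc ψ (φ r' + v) - ψ (φ r + v) ≤ r' - r := by linarith
        _ ≤ |r' - r| := le_abs_self _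
        _ = |r - r'| := abs_sub_comm _ _
end

section
/- Let d ∈ ℕ and m > 1. Define for u₁ ∈ (0,1), u₂ ∈ [0,1), and a ≥ 0 the function r(u₁,u₂,a) = u₂^{1/d} √((u₁^{−1/(d+m)} a)² + m u₁^{−2/(d+m)} − m). Then for all a, b ≥ 0, ∫₀¹ ∫₀¹ |r(u₁,u₂,a) − r(u₁,u₂,b)| du₂ du₁ ≤ (d/(d+1)) · ((d+m)/(d+m−1)) · |a − b|. -/
open Set MeasureTheory

lemma aux_sqrt_one_side {x y c : ℝ} (hy : 0 ≤ y) (hxy : y ≤ x) (hc : 0 ≤ c) :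
    Real.sqrt (x^2 + c) - Real.sqrt (y^2 + c) ≤ x - y := by
  have ht : y ≤ Real.sqrt (y^2+c) := by
    have : Real.sqrt (y^2) ≤ Real.sqrt (y^2+c) := Real.sqrt_le_sqrt (by linarith)
    rwa [Real.sqrt_sq hy] at this
  have ht0 : (0:ℝ) ≤ Real.sqrt (y^2+c) := Real.sqrt_nonneg _
  have h1 : Real.sqrt (x^2 + c) ≤ x - y + Real.sqrt (y^2+c) := by
    have h2 : x^2 + c ≤ (x - y + Real.sqrt (y^2+c))^2 := by
      have ht2 : Real.sqrt (y^2+c) ^ 2 = y^2 + c := Real.sq_sqrt (by positivity)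
      nlinarith
    calc Real.sqrt (x^2+c) ≤ Real.sqrt ((x - y + Real.sqrt (y^2+c))^2) :=
          Real.sqrt_le_sqrt h2
      _ = x - y + Real.sqrt (y^2+c) := Real.sqrt_sq (by linarith)
  linarith

lemma aux_sqrt_lip {x y c : ℝ} (hx : 0 ≤ x) (hy : 0 ≤ y) (hc : 0 ≤ c) :
    |Real.sqrt (x^2 + c) - Real.sqrt (y^2 + c)| ≤ |x - y| := by
  rcases le_total y x with h | h
  · have hmono : Real.sqrt (y^2+c) ≤ Real.sqrt (x^2+c) := Real.sqrt_le_sqrt (by nlinarith)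
    rw [abs_of_nonneg (by linarith), abs_of_nonneg (by linarith)]
    exact aux_sqrt_one_side hy h hc
  · have hmono : Real.sqrt (x^2+c) ≤ Real.sqrt (y^2+c) := Real.sqrt_le_sqrt (by nlinarith)
    rw [abs_sub_comm, abs_sub_comm x y, abs_of_nonneg (by linarith),
      abs_of_nonneg (by linarith)]
    exact aux_sqrt_one_side hx h hc

lemma aux_rpow_integral {q : ℝ} (hq : -1 < q) :
    ∫ x in Set.Ioo (0:ℝ) 1, x ^ q = 1 / (q + 1) := by
  have h := integral_rpow (a := (0:ℝ)) (b := 1) (Or.inl hq)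
  rw [intervalIntegral.integral_of_le zero_le_one, integral_Ioc_eq_integral_Ioo] at h
  rw [h, Real.one_rpow, Real.zero_rpow (by linarith)]
  ring

lemma aux_rpow_integrableOn {q : ℝ} (hq : -1 < q) :
    IntegrableOn (fun x : ℝ => x ^ q) (Set.Ioo 0 1) :=
  ((intervalIntegral.intervalIntegrable_rpow' hq (a := 0) (b := 1)).1).mono_set
    Set.Ioo_subset_Ioc_self

theorem stmt_9 (d : ℕ) (hd : 0 < d) (m : ℝ) (hm : 1 < m)
    (r : ℝ → ℝ → ℝ → ℝ)
    (hr : ∀ u₁ ∈ Set.Ioo (0:ℝ) 1, ∀ u₂ ∈ Set.Ico (0:ℝ) 1, ∀ a : ℝ, 0 ≤ a →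
      r u₁ u₂ a = u₂ ^ (1 / (d:ℝ)) *
        Real.sqrt ((u₁ ^ (-(1 / ((d:ℝ) + m))) * a) ^ 2
          + m * u₁ ^ (-(2 / ((d:ℝ) + m))) - m)) :
    ∀ a : ℝ, 0 ≤ a → ∀ b : ℝ, 0 ≤ b →
      (∫ u₁ in Set.Ioo (0:ℝ) 1, ∫ u₂ in Set.Ioo (0:ℝ) 1, |r u₁ u₂ a - r u₁ u₂ b|) ≤
        ((d:ℝ) / ((d:ℝ) + 1)) * (((d:ℝ) + m) / ((d:ℝ) + m - 1)) * |a - b| := by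
  intro a ha b hb
  have hd1 : (1:ℝ) ≤ (d:ℝ) := by exact_mod_cast hd
  have hdm : (1:ℝ) < (d:ℝ) + m := by linarith
  have hq1 : (-1:ℝ) < 1 / (d:ℝ) := by
    have : (0:ℝ) ≤ 1 / (d:ℝ) := by positivity
    linarith
  have hq2 : (-1:ℝ) < -(1 / ((d:ℝ) + m)) := by
    have : 1 / ((d:ℝ) + m) < 1 := by
      rw [div_lt_one (by linarith)]; linarith
    linarith
  set C := |a - b| with hC
  -- pointwise bound
  have key : ∀ u₁ ∈ Set.Ioo (0:ℝ) 1, ∀ u₂ ∈ Set.Ioo (0:ℝ) 1,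
      |r u₁ u₂ a - r u₁ u₂ b| ≤ u₂ ^ (1 / (d:ℝ)) * (u₁ ^ (-(1 / ((d:ℝ) + m))) * C) := by
    intro u₁ hu₁ u₂ hu₂
    have hu₂' : u₂ ∈ Set.Ico (0:ℝ) 1 := ⟨hu₂.1.le, hu₂.2⟩
    rw [hr u₁ hu₁ u₂ hu₂' a ha, hr u₁ hu₁ u₂ hu₂' b hb]
    set p := u₁ ^ (-(1 / ((d:ℝ) + m))) with hp
    have hp0 : 0 < p := Real.rpow_pos_of_pos hu₁.1 _
    have hu₂0 : (0:ℝ) ≤ u₂ ^ (1 / (d:ℝ)) := Real.rpow_nonneg hu₂.1.le _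
    have hc : 0 ≤ m * u₁ ^ (-(2 / ((d:ℝ) + m))) - m := by
      have h1 : (1:ℝ) ≤ u₁ ^ (-(2 / ((d:ℝ) + m))) :=
        Real.one_le_rpow_of_pos_of_le_one_of_nonpos hu₁.1 hu₁.2.le
          (neg_nonpos.mpr (by positivity))
      nlinarith
    have hsq : |Real.sqrt ((p * a) ^ 2 + (m * u₁ ^ (-(2 / ((d:ℝ) + m))) - m))
        - Real.sqrt ((p * b) ^ 2 + (m * u₁ ^ (-(2 / ((d:ℝ) + m))) - m))| ≤ |p * a - p * b| :=
      aux_sqrt_lip (mul_nonneg hp0.le ha) (mul_nonneg hp0.le hb) hc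
    calc |u₂ ^ (1 / (d:ℝ)) * Real.sqrt ((p * a) ^ 2 + m * u₁ ^ (-(2 / ((d:ℝ) + m))) - m)
          - u₂ ^ (1 / (d:ℝ)) * Real.sqrt ((p * b) ^ 2 + m * u₁ ^ (-(2 / ((d:ℝ) + m))) - m)|
        = u₂ ^ (1 / (d:ℝ)) * |Real.sqrt ((p * a) ^ 2 + (m * u₁ ^ (-(2 / ((d:ℝ) + m))) - m))
            - Real.sqrt ((p * b) ^ 2 + (m * u₁ ^ (-(2 / ((d:ℝ) + m))) - m))| := by
          rw [← mul_sub, abs_mul, abs_of_nonneg hu₂0]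
          ring_nf
      _ ≤ u₂ ^ (1 / (d:ℝ)) * |p * a - p * b| := mul_le_mul_of_nonneg_left hsq hu₂0
      _ = u₂ ^ (1 / (d:ℝ)) * (p * C) := by
          rw [← mul_sub, abs_mul, abs_of_pos hp0]
  -- inner integral bound
  have inner : ∀ u₁ ∈ Set.Ioo (0:ℝ) 1,
      (∫ u₂ in Set.Ioo (0:ℝ) 1, |r u₁ u₂ a - r u₁ u₂ b|)
        ≤ u₁ ^ (-(1 / ((d:ℝ) + m))) * (((d:ℝ) / ((d:ℝ) + 1)) * C) := by
    intro u₁ hu₁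
    have hle : (∫ u₂ in Set.Ioo (0:ℝ) 1, |r u₁ u₂ a - r u₁ u₂ b|)
        ≤ ∫ u₂ in Set.Ioo (0:ℝ) 1, u₂ ^ (1 / (d:ℝ)) * (u₁ ^ (-(1 / ((d:ℝ) + m))) * C) := by
      apply integral_mono_of_nonneg
      · filter_upwards with u₂ using abs_nonneg _
      · exact (aux_rpow_integrableOn hq1).mul_const _
      · filter_upwards [ae_restrict_mem measurableSet_Ioo] with u₂ hu₂
        exact key u₁ hu₁ u₂ hu₂
    rw [integral_mul_const, aux_rpow_integral hq1] at hle
    have hdd : (1 / (d:ℝ) + 1) ≠ 0 := by positivity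
    calc (∫ u₂ in Set.Ioo (0:ℝ) 1, |r u₁ u₂ a - r u₁ u₂ b|)
        ≤ 1 / (1 / (d:ℝ) + 1) * (u₁ ^ (-(1 / ((d:ℝ) + m))) * C) := hle
      _ = u₁ ^ (-(1 / ((d:ℝ) + m))) * (((d:ℝ) / ((d:ℝ) + 1)) * C) := by
          field_simp
          ring
  -- outer integral bound
  have outer : (∫ u₁ in Set.Ioo (0:ℝ) 1, ∫ u₂ in Set.Ioo (0:ℝ) 1, |r u₁ u₂ a - r u₁ u₂ b|)
      ≤ ∫ u₁ in Set.Ioo (0:ℝ) 1, u₁ ^ (-(1 / ((d:ℝ) + m))) * (((d:ℝ) / ((d:ℝ) + 1)) * C) := by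
    apply integral_mono_of_nonneg
    · filter_upwards with u₁ using integral_nonneg fun _ => abs_nonneg _
    · exact (aux_rpow_integrableOn hq2).mul_const _
    · filter_upwards [ae_restrict_mem measurableSet_Ioo] with u₁ hu₁
      exact inner u₁ hu₁
  rw [integral_mul_const, aux_rpow_integral hq2] at outer
  have hlt : 1 / ((d:ℝ) + m) < 1 := by rw [div_lt_one (by linarith)]; linarith
  calc (∫ u₁ in Set.Ioo (0:ℝ) 1, ∫ u₂ in Set.Ioo (0:ℝ) 1, |r u₁ u₂ a - r u₁ u₂ b|)
      ≤ 1 / (-(1 / ((d:ℝ) + m)) + 1) * (((d:ℝ) / ((d:ℝ) + 1)) * C) := outer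
    _ = ((d:ℝ) / ((d:ℝ) + 1)) * (((d:ℝ) + m) / ((d:ℝ) + m - 1)) * C := by
        have hmne : ((d:ℝ) + m) ≠ 0 := by linarith
        rw [show -(1 / ((d:ℝ) + m)) + 1 = ((d:ℝ) + m - 1) / ((d:ℝ) + m) by
          field_simp; ring, one_div_div]
        ring
end

section
/- Let d ∈ ℕ and m > 1. Then lim_{r→∞} ∫₀¹ ( √(u^{−2/(d+m)} + (m u^{−2/(d+m)} − m)/r²) − √((1/4) u^{−2/(d+m)} + (m u^{−2/(d+m)} − m)/r²) ) du = (1/2) ∫₀¹ u^{−1/(d+m)} du = (1/2)·(d+m)/(d+m−1). -/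
open Set MeasureTheory Filter

/-- Auxiliary: `√(x+c) - √(y+c) ≤ √x - √y` for `0 ≤ y ≤ x`, `0 ≤ c`. -/
lemma aux_sqrt_sub_11 (x y c : ℝ) (hy : 0 ≤ y) (hxy : y ≤ x) (hc : 0 ≤ c) :
    Real.sqrt (x + c) - Real.sqrt (y + c) ≤ Real.sqrt x - Real.sqrt y := by
  have hx : 0 ≤ x := le_trans hy hxy
  have A := Real.sq_sqrt (show 0 ≤ x + c by linarith)
  have B := Real.sq_sqrt hy
  have C := Real.sq_sqrt hx
  have D := Real.sq_sqrt (show 0 ≤ y + c by linarith)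
  have E : Real.sqrt ((x + c) * y) ≤ Real.sqrt (x * (y + c)) :=
    Real.sqrt_le_sqrt (by nlinarith)
  have E1 : Real.sqrt (x + c) * Real.sqrt y = Real.sqrt ((x + c) * y) :=
    (Real.sqrt_mul (by linarith) y).symm
  have E2 : Real.sqrt x * Real.sqrt (y + c) = Real.sqrt (x * (y + c)) :=
    (Real.sqrt_mul hx _).symm
  have key : Real.sqrt (x + c) + Real.sqrt y ≤ Real.sqrt x + Real.sqrt (y + c) := by
    have h1 : Real.sqrt (x + c) + Real.sqrt y
        = Real.sqrt ((Real.sqrt (x + c) + Real.sqrt y) ^ 2) :=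
      (Real.sqrt_sq (by positivity)).symm
    have h2 : Real.sqrt x + Real.sqrt (y + c)
        = Real.sqrt ((Real.sqrt x + Real.sqrt (y + c)) ^ 2) :=
      (Real.sqrt_sq (by positivity)).symm
    rw [h1, h2]
    apply Real.sqrt_le_sqrt
    nlinarith
  linarith

theorem stmt_11 (d : ℕ) (hd : 0 < d) (m : ℝ) (hm : 1 < m) :
    Filter.Tendsto (fun rr : ℝ => ∫ u in Set.Ioo (0:ℝ) 1,
        (Real.sqrt (u ^ (-(2 / ((d:ℝ) + m))) + (m * u ^ (-(2 / ((d:ℝ) + m))) - m) / rr ^ 2)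
          - Real.sqrt ((1/4) * u ^ (-(2 / ((d:ℝ) + m)))
              + (m * u ^ (-(2 / ((d:ℝ) + m))) - m) / rr ^ 2)))
      Filter.atTop
      (nhds ((1/2) * ∫ u in Set.Ioo (0:ℝ) 1, u ^ (-(1 / ((d:ℝ) + m))))) ∧
    (1/2) * (∫ u in Set.Ioo (0:ℝ) 1, u ^ (-(1 / ((d:ℝ) + m))))
      = (1/2) * (((d:ℝ) + m) / ((d:ℝ) + m - 1)) := by
  set p : ℝ := -(2 / ((d:ℝ) + m)) with hp
  set q : ℝ := -(1 / ((d:ℝ) + m)) with hqdef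
  have hd1 : (1:ℝ) ≤ (d:ℝ) := by exact_mod_cast hd
  have hdm0 : (0:ℝ) < (d:ℝ) + m := by linarith
  have hdm1 : (1:ℝ) < (d:ℝ) + m := by linarith
  have hq : (-1:ℝ) < q := by
    have : 1 / ((d:ℝ) + m) < 1 := (div_lt_one hdm0).mpr hdm1
    rw [hqdef]; linarith
  have hp0 : p ≤ 0 := by
    rw [hp]
    have : 0 ≤ 2 / ((d:ℝ) + m) := by positivity
    linarith
  -- key per-point facts
  have hsqrt : ∀ u ∈ Ioo (0:ℝ) 1,
      Real.sqrt (u ^ p) = u ^ q ∧ Real.sqrt ((1/4) * u ^ p) = (1/2) * u ^ q := by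
    intro u hu
    have hu0 := hu.1
    have ha2 : u ^ p = (u ^ q) ^ 2 := by
      rw [sq, ← Real.rpow_add hu0]
      congr 1
      rw [hp, hqdef]; ring
    constructor
    · rw [ha2, Real.sqrt_sq (Real.rpow_nonneg hu0.le _)]
    · rw [show (1/4 : ℝ) * u ^ p = ((1/2) * u ^ q) ^ 2 by rw [mul_pow, ← ha2]; norm_num]
      exact Real.sqrt_sq (by positivity)
  have ha1 : ∀ u ∈ Ioo (0:ℝ) 1, 1 ≤ u ^ p := fun u hu =>
    Real.one_le_rpow_of_pos_of_le_one_of_nonpos hu.1 hu.2.le hp0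
  -- integrability of the bound
  have hIntq : IntegrableOn (fun u : ℝ => u ^ q) (Ioo (0:ℝ) 1) volume := by
    have h1 : IntervalIntegrable (fun u : ℝ => u ^ q) volume 0 1 :=
      intervalIntegral.intervalIntegrable_rpow' hq
    have h2 : IntegrableOn (fun u : ℝ => u ^ q) (Ioc (0:ℝ) 1) volume :=
      (intervalIntegrable_iff_integrableOn_Ioc_of_le zero_le_one).mp h1
    exact h2.mono_set Ioo_subset_Ioc_self
  have hIntBound : IntegrableOn (fun u : ℝ => (1/2) * u ^ q) (Ioo (0:ℝ) 1) volume :=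
    hIntq.const_mul _
  constructor
  · -- the limit statement
    rw [show ((1:ℝ)/2) * ∫ u in Ioo (0:ℝ) 1, u ^ q
        = ∫ u in Ioo (0:ℝ) 1, (1/2) * u ^ q from (integral_const_mul _ _).symm]
    apply MeasureTheory.tendsto_integral_filter_of_dominated_convergence
      (fun u => (1/2) * u ^ q)
    · -- measurability
      apply Filter.Eventually.of_forall
      intro rr
      have hcont : ContinuousOn (fun u : ℝ =>
          Real.sqrt (u ^ p + (m * u ^ p - m) / rr ^ 2)
            - Real.sqrt ((1/4) * u ^ p + (m * u ^ p - m) / rr ^ 2)) (Ioo (0:ℝ) 1) := by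
        have hrp : ContinuousOn (fun u : ℝ => u ^ p) (Ioo (0:ℝ) 1) :=
          ContinuousOn.rpow_const continuousOn_id (fun u hu => Or.inl (ne_of_gt hu.1))
        have hnum : ContinuousOn (fun u : ℝ => (m * u ^ p - m) / rr ^ 2) (Ioo (0:ℝ) 1) :=
          ((continuousOn_const.mul hrp).sub continuousOn_const).div_const _
        apply ContinuousOn.sub
        · exact Real.continuous_sqrt.comp_continuousOn (hrp.add hnum)
        · exact Real.continuous_sqrt.comp_continuousOn
            ((continuousOn_const.mul hrp).add hnum)
      exact hcont.aestronglyMeasurable measurableSet_Ioo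
    · -- bound
      apply Filter.Eventually.of_forall
      intro rr
      rw [ae_restrict_iff' measurableSet_Ioo]
      apply ae_of_all
      intro u hu
      obtain ⟨hs1, hs2⟩ := hsqrt u hu
      have ha := ha1 u hu
      set a := u ^ p with hadef
      set c := (m * a - m) / rr ^ 2 with hcdef
      have hc : 0 ≤ c := div_nonneg (by nlinarith) (sq_nonneg rr)
      have hmono : Real.sqrt ((1/4) * a + c) ≤ Real.sqrt (a + c) :=
        Real.sqrt_le_sqrt (by linarith)
      have hkey : Real.sqrt (a + c) - Real.sqrt ((1/4) * a + c)
          ≤ Real.sqrt a - Real.sqrt ((1/4) * a) := by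
        have := aux_sqrt_sub_11 a ((1/4) * a) c (by linarith) (by linarith) hc
        linarith
      rw [Real.norm_eq_abs, abs_of_nonneg (by linarith)]
      rw [hs1, hs2] at hkey
      linarith
    · exact hIntBound
    · -- pointwise limit
      rw [ae_restrict_iff' measurableSet_Ioo]
      apply ae_of_all
      intro u hu
      obtain ⟨hs1, hs2⟩ := hsqrt u hu
      set a := u ^ p with hadef
      have h0 : Tendsto (fun rr : ℝ => (m * a - m) / rr ^ 2) atTop (nhds 0) :=
        tendsto_const_nhds.div_atTop (tendsto_pow_atTop two_ne_zero)
      have h1 : Tendsto (fun rr : ℝ => Real.sqrt (a + (m * a - m) / rr ^ 2)) atTop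
          (nhds (Real.sqrt (a + 0))) :=
        (Real.continuous_sqrt.tendsto _).comp (tendsto_const_nhds.add h0)
      have h2 : Tendsto (fun rr : ℝ => Real.sqrt ((1/4) * a + (m * a - m) / rr ^ 2)) atTop
          (nhds (Real.sqrt ((1/4) * a + 0))) :=
        (Real.continuous_sqrt.tendsto _).comp (tendsto_const_nhds.add h0)
      have h3 := h1.sub h2
      rw [add_zero, add_zero, hs1, hs2] at h3
      convert h3 using 2
      ring
  · -- the value of the integral
    have hq1 : q + 1 ≠ 0 := by linarith
    have : ∫ u in Ioo (0:ℝ) 1, u ^ q = ((d:ℝ) + m) / ((d:ℝ) + m - 1) := by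
      rw [← MeasureTheory.integral_Ioc_eq_integral_Ioo,
        ← intervalIntegral.integral_of_le zero_le_one,
        integral_rpow (Or.inl hq), Real.one_rpow, Real.zero_rpow hq1]
      rw [hqdef]
      field_simp
      ring
    rw [this]
end

section
/- Let k ≥ 1, m > 1, ε > 0, and define h(r) = r^k on ℝ₊ with inverse h⁻¹(s) = s^{1/k}. For u₁ ∈ (0,1), u₂ ∈ [0,1), a ≥ ε, set r(u₁,u₂,a) = h⁻¹( h(u₂^{1/k} u₁^{−1/(k+m)} a) + (1 − u₂) ε^k ). Then for all a, b ≥ ε, ∫₀¹ ∫₀¹ |r(u₁,u₂,a) − r(u₁,u₂,b)| du₂ du₁ ≤ (k/(k+1)) · ((k+m)/(k+m−1)) · |a − b|. -/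
open Set MeasureTheory

private lemma convex_diff_mono {f : ℝ → ℝ} (hf : ConvexOn ℝ (Set.Ici 0) f) {y A d : ℝ}
    (hy : 0 ≤ y) (hyA : y ≤ A) (hd : 0 ≤ d) : f (y + d) - f y ≤ f (A + d) - f A := by
  rcases eq_or_lt_of_le hd with rfl | hd
  · simp
  rcases eq_or_lt_of_le hyA with rfl | hyA
  · simp
  have hA : (0:ℝ) ≤ A := le_trans hy hyA.le
  have h1 : (f (y + d) - f y) / (y + d - y) ≤ (f (A + d) - f y) / (A + d - y) :=
    hf.secant_mono (Set.mem_Ici.2 hy) (Set.mem_Ici.2 (by linarith)) (Set.mem_Ici.2 (by linarith))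
      ((by linarith : y < y + d).ne') ((by linarith : y < A + d).ne') (by linarith)
  have h2 : (f y - f (A + d)) / (y - (A + d)) ≤ (f A - f (A + d)) / (A - (A + d)) :=
    hf.secant_mono (Set.mem_Ici.2 (by linarith : (0:ℝ) ≤ A + d)) (Set.mem_Ici.2 hy)
      (Set.mem_Ici.2 hA) ((by linarith : y < A + d).ne) ((by linarith : A < A + d).ne) hyA.le
  have e2 : (f y - f (A + d)) / (y - (A + d)) = (f (A + d) - f y) / (A + d - y) := by
    rw [← neg_div_neg_eq]; ring_nf
  have e3 : (f A - f (A + d)) / (A - (A + d)) = (f (A + d) - f A) / d := by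
    rw [← neg_div_neg_eq]; ring_nf
  rw [e2, e3] at h2
  have h3 : (f (y + d) - f y) / d ≤ (f (A + d) - f A) / d := by
    calc (f (y + d) - f y) / d = (f (y + d) - f y) / (y + d - y) := by ring_nf
    _ ≤ (f (A + d) - f y) / (A + d - y) := h1
    _ ≤ (f (A + d) - f A) / d := h2
  exact (div_le_div_iff_of_pos_right hd).1 h3

private lemma lip_aux (k c : ℝ) (hk : 1 ≤ k) (hc : 0 ≤ c) {x y : ℝ} (hy : 0 ≤ y)
    (hxy : y ≤ x) : (x ^ k + c) ^ (1/k) - (y ^ k + c) ^ (1/k) ≤ x - y := by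
  have hk0 : (0:ℝ) < k := by linarith
  have hx : 0 ≤ x := le_trans hy hxy
  set A := (y ^ k + c) ^ (1/k) with hAdef
  have hyk : 0 ≤ y ^ k := Real.rpow_nonneg hy k
  have hA0 : 0 ≤ A := Real.rpow_nonneg (by linarith) _
  have hAk : A ^ k = y ^ k + c := by
    rw [hAdef, ← Real.rpow_mul (by linarith), one_div_mul_cancel hk0.ne', Real.rpow_one]
  have hyA : y ≤ A := by
    calc y = (y ^ k) ^ (1/k) := by
            rw [← Real.rpow_mul hy, mul_one_div, div_self hk0.ne', Real.rpow_one]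
    _ ≤ (y ^ k + c) ^ (1/k) := Real.rpow_le_rpow hyk (by linarith) (by positivity)
  have hdm := convex_diff_mono (convexOn_rpow hk) hy hyA (sub_nonneg.2 hxy)
  simp only [add_sub_cancel] at hdm
  have key : x ^ k + c ≤ (A + (x - y)) ^ k := by
    rw [hAk] at hdm; linarith
  have : (x ^ k + c) ^ (1/k) ≤ ((A + (x - y)) ^ k) ^ (1/k) :=
    Real.rpow_le_rpow (by positivity) key (by positivity)
  rw [← Real.rpow_mul (by linarith), mul_one_div, div_self hk0.ne', Real.rpow_one] at this
  linarith

private lemma lip (k c : ℝ) (hk : 1 ≤ k) (hc : 0 ≤ c) {x y : ℝ} (hx : 0 ≤ x) (hy : 0 ≤ y) :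
    |(x ^ k + c) ^ (1/k) - (y ^ k + c) ^ (1/k)| ≤ |x - y| := by
  have hk0 : (0:ℝ) < k := by linarith
  rcases le_total y x with h | h
  · have mono : (y ^ k + c) ^ (1/k) ≤ (x ^ k + c) ^ (1/k) :=
      Real.rpow_le_rpow (by positivity)
        (add_le_add_left (Real.rpow_le_rpow hy h hk0.le) c) (by positivity)
    rw [abs_of_nonneg (sub_nonneg.2 mono), abs_of_nonneg (sub_nonneg.2 h)]
    exact lip_aux k c hk hc hy h
  · have mono : (x ^ k + c) ^ (1/k) ≤ (y ^ k + c) ^ (1/k) :=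
      Real.rpow_le_rpow (by positivity)
        (add_le_add_left (Real.rpow_le_rpow hx h hk0.le) c) (by positivity)
    rw [abs_of_nonpos (sub_nonpos.2 mono), abs_of_nonpos (sub_nonpos.2 h)]
    have := lip_aux k c hk hc hx h
    linarith

private lemma integral_Ioo_rpow {p : ℝ} (hp : -1 < p) :
    ∫ x in Set.Ioo (0:ℝ) 1, x ^ p = 1 / (p + 1) := by
  rw [← integral_Ioc_eq_integral_Ioo, ← intervalIntegral.integral_of_le zero_le_one,
    integral_rpow (Or.inl hp), Real.one_rpow, Real.zero_rpow (by linarith : p + 1 ≠ 0)]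
  ring

private lemma integrableOn_Ioo_rpow {p : ℝ} (hp : -1 < p) :
    IntegrableOn (fun x : ℝ => x ^ p) (Set.Ioo (0:ℝ) 1) := by
  have h := intervalIntegral.intervalIntegrable_rpow' (a := (0:ℝ)) (b := 1) hp
  rwa [intervalIntegrable_iff_integrableOn_Ioo_of_le zero_le_one] at h

theorem stmt_12 (k m ε : ℝ) (hk : 1 ≤ k) (hm : 1 < m) (hε : 0 < ε)
    (r : ℝ → ℝ → ℝ → ℝ)
    (hr : ∀ u₁ ∈ Set.Ioo (0:ℝ) 1, ∀ u₂ ∈ Set.Ico (0:ℝ) 1, ∀ a : ℝ, ε ≤ a →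
      r u₁ u₂ a = ((u₂ ^ (1 / k) * u₁ ^ (-(1 / (k + m))) * a) ^ k
        + (1 - u₂) * ε ^ k) ^ (1 / k)) :
    ∀ a : ℝ, ε ≤ a → ∀ b : ℝ, ε ≤ b →
      (∫ u₁ in Set.Ioo (0:ℝ) 1, ∫ u₂ in Set.Ioo (0:ℝ) 1, |r u₁ u₂ a - r u₁ u₂ b|) ≤
        (k / (k + 1)) * ((k + m) / (k + m - 1)) * |a - b| := by
  intro a ha b hb
  have hk0 : (0:ℝ) < k := by linarith
  have hkm1 : (1:ℝ) < k + m := by linarith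
  have ha0 : (0:ℝ) ≤ a := le_trans hε.le ha
  have hb0 : (0:ℝ) ≤ b := le_trans hε.le hb
  set p₁ : ℝ := -(1 / (k + m)) with hp₁
  have hp₁gt : (-1:ℝ) < p₁ := by
    rw [hp₁, neg_lt_neg_iff]
    rw [div_lt_one (by linarith)]; linarith
  have hp₂gt : (-1:ℝ) < 1 / k := by
    have : (0:ℝ) < 1 / k := by positivity
    linarith
  have hpt : ∀ u₁ ∈ Set.Ioo (0:ℝ) 1, ∀ u₂ ∈ Set.Ioo (0:ℝ) 1,
      |r u₁ u₂ a - r u₁ u₂ b| ≤ u₂ ^ (1/k) * (u₁ ^ p₁ * |a - b|) := by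
    intro u₁ hu₁ u₂ hu₂
    have hu₂' : u₂ ∈ Set.Ico (0:ℝ) 1 := ⟨hu₂.1.le, hu₂.2⟩
    have hC : 0 ≤ u₂ ^ (1/k) * u₁ ^ p₁ :=
      mul_nonneg (Real.rpow_nonneg hu₂.1.le _) (Real.rpow_nonneg hu₁.1.le _)
    have hc : 0 ≤ (1 - u₂) * ε ^ k :=
      mul_nonneg (by linarith [hu₂.2]) (Real.rpow_nonneg hε.le k)
    rw [hr u₁ hu₁ u₂ hu₂' a ha, hr u₁ hu₁ u₂ hu₂' b hb]
    calc |((u₂ ^ (1/k) * u₁ ^ p₁ * a) ^ k + (1 - u₂) * ε ^ k) ^ (1/k)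
          - ((u₂ ^ (1/k) * u₁ ^ p₁ * b) ^ k + (1 - u₂) * ε ^ k) ^ (1/k)|
        ≤ |u₂ ^ (1/k) * u₁ ^ p₁ * a - u₂ ^ (1/k) * u₁ ^ p₁ * b| :=
          lip k _ hk hc (mul_nonneg hC ha0) (mul_nonneg hC hb0)
      _ = u₂ ^ (1/k) * (u₁ ^ p₁ * |a - b|) := by
          rw [← mul_sub, abs_mul, abs_of_nonneg hC]; ring
  have hinner : ∀ u₁ ∈ Set.Ioo (0:ℝ) 1,
      (∫ u₂ in Set.Ioo (0:ℝ) 1, |r u₁ u₂ a - r u₁ u₂ b|)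
        ≤ u₁ ^ p₁ * (k / (k + 1) * |a - b|) := by
    intro u₁ hu₁
    have step : (∫ u₂ in Set.Ioo (0:ℝ) 1, |r u₁ u₂ a - r u₁ u₂ b|)
        ≤ ∫ u₂ in Set.Ioo (0:ℝ) 1, u₂ ^ (1/k) * (u₁ ^ p₁ * |a - b|) :=
      integral_mono_of_nonneg (Filter.Eventually.of_forall fun u₂ => abs_nonneg _)
        ((integrableOn_Ioo_rpow hp₂gt).mul_const _)
        ((ae_restrict_iff' measurableSet_Ioo).2
          (Filter.Eventually.of_forall fun u₂ hu₂ => hpt u₁ hu₁ u₂ hu₂))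
    refine step.trans_eq ?_
    rw [integral_mul_const, integral_Ioo_rpow hp₂gt]
    have h1 : 1 / (1/k + 1) = k / (k + 1) := by
      rw [div_add' _ _ _ hk0.ne', one_div_div]; ring
    rw [h1]; ring
  calc (∫ u₁ in Set.Ioo (0:ℝ) 1, ∫ u₂ in Set.Ioo (0:ℝ) 1, |r u₁ u₂ a - r u₁ u₂ b|)
      ≤ ∫ u₁ in Set.Ioo (0:ℝ) 1, u₁ ^ p₁ * (k / (k + 1) * |a - b|) :=
        integral_mono_of_nonneg
          (Filter.Eventually.of_forall fun u₁ => integral_nonneg fun u₂ => abs_nonneg _)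
          ((integrableOn_Ioo_rpow hp₁gt).mul_const _)
          ((ae_restrict_iff' measurableSet_Ioo).2 (Filter.Eventually.of_forall hinner))
    _ = (k / (k + 1)) * ((k + m) / (k + m - 1)) * |a - b| := by
        rw [integral_mul_const, integral_Ioo_rpow hp₁gt, hp₁]
        have h2 : 1 / (-(1 / (k + m)) + 1) = (k + m) / (k + m - 1) := by
          rw [neg_add_eq_sub, one_sub_div (by linarith : k + m ≠ 0), one_div_div]
        rw [h2]; ring
end

section
/- Let k > 0 and let ℓ : (0, T) → (0, ∞) (with T = sup{t > 0 : ℓ(t) > 0}) be continuous, strictly decreasing, with lim_{t→T-} ℓ(t) = 0 and sup ℓ = lim_{t→0+} ℓ(t) ∈ (0, ∞]. Then the function (0, (sup ℓ)^{1/k}) → (0,∞), r ↦ ℓ⁻¹(r^k), is log-concave if and only if the function s ↦ ℓ(exp(−s))^{1/k}, restricted to (−log T, ∞), is concave. -/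
open Set Filter

theorem stmt_16 (k : ℝ) (hk : 0 < k) (T : EReal) (hT : 0 < T)
    (ℓ : ℝ → ℝ) (D : Set ℝ) (hD : D = {t : ℝ | 0 < t ∧ (t : EReal) < T})
    (hpos : ∀ t ∈ D, 0 < ℓ t)
    (hcont : ContinuousOn ℓ D) (hanti : StrictAntiOn ℓ D)
    (hlimT : Filter.Tendsto (fun t : ℝ => (ℓ t : EReal))
      ((nhdsWithin T (Real.toEReal '' D)).comap Real.toEReal) (nhds 0))
    (S : EReal) (hS : S = sSup (Real.toEReal '' (ℓ '' D)))
    (hlimS : Filter.Tendsto (fun t : ℝ => (ℓ t : EReal))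
      ((nhdsWithin 0 (Real.toEReal '' D)).comap Real.toEReal) (nhds S)) :
    ConcaveOn ℝ {r : ℝ | 0 < r ∧ ((r ^ k : ℝ) : EReal) < S}
        (fun r => Real.log (Function.invFunOn ℓ D (r ^ k))) ↔
    ConcaveOn ℝ {s : ℝ | ((Real.exp (-s) : ℝ) : EReal) < T}
        (fun s => (ℓ (Real.exp (-s))) ^ (1 / k)) := by
  have hk0 : k ≠ 0 := ne_of_gt hk
  set A : Set ℝ := {r : ℝ | 0 < r ∧ ((r ^ k : ℝ) : EReal) < S} with hA
  set B : Set ℝ := {s : ℝ | ((Real.exp (-s) : ℝ) : EReal) < T} with hB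
  set F : ℝ → ℝ := fun r => Real.log (Function.invFunOn ℓ D (r ^ k)) with hF
  set G : ℝ → ℝ := fun s => (ℓ (Real.exp (-s))) ^ (1 / k) with hG
  -- membership in D
  have hDmem : ∀ t : ℝ, t ∈ D ↔ 0 < t ∧ (t : EReal) < T := by
    intro t; rw [hD]; rfl
  -- D is order-connected
  have hDconn : ∀ t₁ ∈ D, ∀ t₂ ∈ D, Icc t₁ t₂ ⊆ D := by
    intro t₁ h₁ t₂ h₂ t ht
    rw [hDmem] at *
    exact ⟨lt_of_lt_of_le h₁.1 ht.1, lt_of_le_of_lt (EReal.coe_le_coe_iff.2 ht.2) h₂.2⟩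
  -- every value of ℓ on D is strictly below S
  have hltS : ∀ t ∈ D, (ℓ t : EReal) < S := by
    intro t ht
    have ht' := (hDmem t).1 ht
    have h2 : t / 2 ∈ D := (hDmem _).2 ⟨by linarith [ht'.1],
      lt_trans (EReal.coe_lt_coe_iff.2 (by linarith [ht'.1])) ht'.2⟩
    have hlt : ℓ t < ℓ (t / 2) := hanti h2 ht (by linarith [ht'.1])
    calc (ℓ t : EReal) < (ℓ (t / 2) : EReal) := EReal.coe_lt_coe_iff.2 hlt
      _ ≤ S := by
          rw [hS]
          exact le_sSup ⟨ℓ (t / 2), ⟨t / 2, h2, rfl⟩, rfl⟩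
  -- the comap filter at T is nontrivial
  have hTcl : T ∈ closure (Real.toEReal '' D) := by
    rcases eq_or_ne T ⊤ with rfl | hne
    · have htend : Tendsto Real.toEReal atTop (nhds (⊤ : EReal)) := by
        rw [Tendsto, ← EReal.nhdsWithin_top]
        exact nhdsWithin_le_nhds
      refine mem_closure_of_tendsto htend ?_
      filter_upwards [eventually_gt_atTop (0 : ℝ)] with x hx
      exact ⟨x, (hDmem x).2 ⟨hx, EReal.coe_lt_top x⟩, rfl⟩
    · have hbot : T ≠ ⊥ := ne_of_gt (lt_trans EReal.bot_lt_zero hT)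
      have hTeq : ((T.toReal : ℝ) : EReal) = T := EReal.coe_toReal hne hbot
      have hpos' : (0 : ℝ) < T.toReal := by
        rw [← EReal.coe_lt_coe_iff, hTeq]
        exact_mod_cast hT
      have hsub : Ioo (0 : ℝ) T.toReal ⊆ D := by
        intro t ht
        refine (hDmem t).2 ⟨ht.1, ?_⟩
        rw [← hTeq]
        exact_mod_cast ht.2
      have h1 : T.toReal ∈ closure (Ioo (0 : ℝ) T.toReal) := by
        rw [closure_Ioo (ne_of_lt hpos')]
        exact right_mem_Icc.2 hpos'.le
      have h3 : T ∈ closure (Real.toEReal '' Ioo (0 : ℝ) T.toReal) := by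
        rw [← hTeq]
        exact image_closure_subset_closure_image continuous_coe_real_ereal ⟨_, h1, rfl⟩
      exact closure_mono (image_mono hsub) h3
  have hNB : (((nhdsWithin T (Real.toEReal '' D)).comap Real.toEReal)).NeBot := by
    have h1 : (nhdsWithin T (Real.toEReal '' D)).NeBot :=
      mem_closure_iff_nhdsWithin_neBot.1 hTcl
    refine Filter.comap_neBot fun t ht => ?_
    have h2 : t ∩ Real.toEReal '' D ∈ nhdsWithin T (Real.toEReal '' D) :=
      inter_mem ht self_mem_nhdsWithin
    obtain ⟨x, hx⟩ := h1.nonempty_of_mem h2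
    rcases hx.2 with ⟨a, _, rfl⟩
    exact ⟨a, hx.1⟩
  -- surjectivity : every value in (0, S) is attained
  have hexists : ∀ v : ℝ, 0 < v → (v : EReal) < S → ∃ t ∈ D, ℓ t = v := by
    intro v hv hvS
    -- value above v
    rw [hS] at hvS
    obtain ⟨x, hxmem, hxv⟩ := lt_sSup_iff.1 hvS
    obtain ⟨w, ⟨t₂, ht₂, rfl⟩, rfl⟩ := hxmem
    have hv2 : v < ℓ t₂ := EReal.coe_lt_coe_iff.1 hxv
    -- value below v
    have hev : ∀ᶠ t in ((nhdsWithin T (Real.toEReal '' D)).comap Real.toEReal),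
        t ∈ D ∧ ℓ t < v := by
      have h1 : ∀ᶠ t in ((nhdsWithin T (Real.toEReal '' D)).comap Real.toEReal),
          (ℓ t : EReal) < (v : EReal) :=
        hlimT.eventually_lt_const (by exact_mod_cast hv)
      have h2 : D ∈ ((nhdsWithin T (Real.toEReal '' D)).comap Real.toEReal) := by
        have h0 : Real.toEReal ⁻¹' (Real.toEReal '' D) ∈
            ((nhdsWithin T (Real.toEReal '' D)).comap Real.toEReal) :=
          Filter.preimage_mem_comap self_mem_nhdsWithin
        rwa [Set.preimage_image_eq D EReal.coe_injective] at h0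
      filter_upwards [h1, h2] with t h1 h2
      exact ⟨h2, EReal.coe_lt_coe_iff.1 h1⟩
    obtain ⟨t₁, ht₁D, ht₁⟩ := hev.exists
    -- t₂ < t₁
    have hlt : t₂ < t₁ := by
      rcases lt_trichotomy t₂ t₁ with h | h | h
      · exact h
      · exact absurd (h ▸ hv2) (by linarith)
      · have := hanti ht₁D ht₂ h
        linarith
    have hIcc : Icc t₂ t₁ ⊆ D := hDconn t₂ ht₂ t₁ ht₁D
    have hIV := intermediate_value_Icc' hlt.le (hcont.mono hIcc)
    obtain ⟨t, htm, htv⟩ := hIV ⟨ht₁.le, hv2.le⟩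
    exact ⟨t, hIcc htm, htv⟩
  -- inverse function specification
  have hspec : ∀ r ∈ A, Function.invFunOn ℓ D (r ^ k) ∈ D ∧
      ℓ (Function.invFunOn ℓ D (r ^ k)) = r ^ k := by
    intro r hr
    have hv : ∃ t ∈ D, ℓ t = r ^ k := hexists _ (Real.rpow_pos_of_pos hr.1 k) hr.2
    exact ⟨Function.invFunOn_mem hv, Function.invFunOn_eq hv⟩
  -- F is strictly decreasing on A
  have hFstrict : ∀ x ∈ A, ∀ y ∈ A, x < y → F y < F x := by
    intro x hx y hy hxy
    obtain ⟨htx, hℓx⟩ := hspec x hx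
    obtain ⟨hty, hℓy⟩ := hspec y hy
    have h1 : ℓ (Function.invFunOn ℓ D (x ^ k)) < ℓ (Function.invFunOn ℓ D (y ^ k)) := by
      rw [hℓx, hℓy]; exact Real.rpow_lt_rpow hx.1.le hxy hk
    have h2 : Function.invFunOn ℓ D (y ^ k) < Function.invFunOn ℓ D (x ^ k) := by
      rcases lt_trichotomy (Function.invFunOn ℓ D (y ^ k)) (Function.invFunOn ℓ D (x ^ k)) with
        h | h | h
      · exact h
      · rw [h] at h1; linarith
      · have := hanti htx hty h; linarith
    exact Real.log_lt_log ((hDmem _).1 hty).1 h2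
  have hFanti : ∀ x ∈ A, ∀ y ∈ A, x ≤ y → F y ≤ F x := by
    intro x hx y hy hxy
    rcases eq_or_lt_of_le hxy with rfl | h
    · exact le_refl _
    · exact (hFstrict x hx y hy h).le
  -- G maps B into A, and F ∘ G = -id on B
  have hmemB : ∀ s ∈ B, Real.exp (-s) ∈ D := by
    intro s hs
    exact (hDmem _).2 ⟨Real.exp_pos _, hs⟩
  have hGk : ∀ s ∈ B, (G s) ^ k = ℓ (Real.exp (-s)) := by
    intro s hs
    have h1 : 0 < ℓ (Real.exp (-s)) := hpos _ (hmemB s hs)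
    rw [hG]
    simp only
    rw [one_div, Real.rpow_inv_rpow h1.le hk0]
  have hGA : ∀ s ∈ B, G s ∈ A := by
    intro s hs
    have h1 : 0 < ℓ (Real.exp (-s)) := hpos _ (hmemB s hs)
    refine ⟨Real.rpow_pos_of_pos h1 _, ?_⟩
    rw [hGk s hs]
    exact hltS _ (hmemB s hs)
  have hFG : ∀ s ∈ B, F (G s) = -s := by
    intro s hs
    have ht := hmemB s hs
    have hex : ∃ a ∈ D, ℓ a = ℓ (Real.exp (-s)) := ⟨_, ht, rfl⟩
    have h2 : Function.invFunOn ℓ D (ℓ (Real.exp (-s))) = Real.exp (-s) :=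
      hanti.injOn (Function.invFunOn_mem hex) ht (Function.invFunOn_eq hex)
    rw [hF]
    simp only
    rw [hGk s hs, h2, Real.log_exp]
  -- every point of A comes from B
  have hsurj : ∀ r ∈ A, ∃ s ∈ B, G s = r ∧ F r = -s := by
    intro r hr
    obtain ⟨ht, hℓ⟩ := hspec r hr
    refine ⟨-Real.log (Function.invFunOn ℓ D (r ^ k)), ?_, ?_, ?_⟩
    · show ((Real.exp (-(-Real.log _)) : ℝ) : EReal) < T
      rw [neg_neg, Real.exp_log ((hDmem _).1 ht).1]
      exact ((hDmem _).1 ht).2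
    · show (ℓ (Real.exp (-(-Real.log _)))) ^ (1 / k) = r
      rw [neg_neg, Real.exp_log ((hDmem _).1 ht).1, hℓ, one_div,
        Real.rpow_rpow_inv hr.1.le hk0]
    · simp [hF]
  -- convexity of A and B
  have hAconv : Convex ℝ A := by
    intro x hx y hy a b ha hb hab
    simp only [smul_eq_mul]
    have hmax : a * x + b * y ≤ max x y := by
      have h1 : a * x ≤ a * max x y := mul_le_mul_of_nonneg_left (le_max_left _ _) ha
      have h2 : b * y ≤ b * max x y := mul_le_mul_of_nonneg_left (le_max_right _ _) hb
      have h3 : a * max x y + b * max x y = max x y := by rw [← add_mul, hab, one_mul]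
      linarith
    have hmin : min x y ≤ a * x + b * y := by
      have h1 : a * min x y ≤ a * x := mul_le_mul_of_nonneg_left (min_le_left _ _) ha
      have h2 : b * min x y ≤ b * y := mul_le_mul_of_nonneg_left (min_le_right _ _) hb
      have h3 : a * min x y + b * min x y = min x y := by rw [← add_mul, hab, one_mul]
      linarith
    have hpos' : 0 < a * x + b * y := lt_of_lt_of_le (lt_min hx.1 hy.1) hmin
    refine ⟨hpos', ?_⟩
    have h3 : (a * x + b * y) ^ k ≤ (max x y) ^ k :=
      Real.rpow_le_rpow hpos'.le hmax hk.le
    have h4 : (((max x y) ^ k : ℝ) : EReal) < S := by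
      rcases max_cases x y with ⟨h, _⟩ | ⟨h, _⟩ <;> rw [h]
      · exact hx.2
      · exact hy.2
    exact lt_of_le_of_lt (EReal.coe_le_coe_iff.2 h3) h4
  have hBconv : Convex ℝ B := by
    intro x hx y hy a b ha hb hab
    simp only [smul_eq_mul]
    have hmin : min x y ≤ a * x + b * y := by
      have h1 : a * min x y ≤ a * x := mul_le_mul_of_nonneg_left (min_le_left _ _) ha
      have h2 : b * min x y ≤ b * y := mul_le_mul_of_nonneg_left (min_le_right _ _) hb
      have h3 : a * min x y + b * min x y = min x y := by rw [← add_mul, hab, one_mul]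
      linarith
    show ((Real.exp (-(a * x + b * y)) : ℝ) : EReal) < T
    have h1 : Real.exp (-(a * x + b * y)) ≤ Real.exp (-min x y) := by
      apply Real.exp_le_exp.2; linarith
    have h2 : ((Real.exp (-min x y) : ℝ) : EReal) < T := by
      rcases min_cases x y with ⟨h, _⟩ | ⟨h, _⟩ <;> rw [h]
      · exact hx
      · exact hy
    exact lt_of_le_of_lt (EReal.coe_le_coe_iff.2 h1) h2
  constructor
  · -- F concave → G concave
    intro hFc
    refine ⟨hBconv, ?_⟩
    intro s hs u hu a b ha hb hab
    have hc : a • s + b • u ∈ B := hBconv hs hu ha hb hab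
    have hxA := hGA s hs
    have hyA := hGA u hu
    have hxyA : a • G s + b • G u ∈ A := hAconv hxA hyA ha hb hab
    have h1 : a • F (G s) + b • F (G u) ≤ F (a • G s + b • G u) :=
      hFc.2 hxA hyA ha hb hab
    rw [hFG s hs, hFG u hu] at h1
    by_contra h
    push_neg at h
    have h2 : F (a • G s + b • G u) < F (G (a • s + b • u)) :=
      hFstrict _ (hGA _ hc) _ hxyA h
    rw [hFG _ hc] at h2
    simp only [smul_eq_mul] at h1 h2
    linarith
  · -- G concave → F concave
    intro hGc
    refine ⟨hAconv, ?_⟩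
    intro x hx y hy a b ha hb hab
    obtain ⟨s, hsB, hGs, hFs⟩ := hsurj x hx
    obtain ⟨u, huB, hGu, hFu⟩ := hsurj y hy
    have hc : a • s + b • u ∈ B := hBconv hsB huB ha hb hab
    have h1 : a • x + b • y ≤ G (a • s + b • u) := by
      calc a • x + b • y = a • G s + b • G u := by rw [hGs, hGu]
        _ ≤ G (a • s + b • u) := hGc.2 hsB huB ha hb hab
    have hxyA : a • x + b • y ∈ A := hAconv hx hy ha hb hab
    have h2 : F (G (a • s + b • u)) ≤ F (a • x + b • y) :=
      hFanti _ hxyA _ (hGA _ hc) h1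
    rw [hFG _ hc] at h2
    rw [hFs, hFu]
    simp only [smul_eq_mul] at h2 ⊢
    linarith
end

section
/- Let d ∈ ℕ, m > 2, and let χ : S^{d−1} → (0,∞) be measurable with ∫_{S^{d−1}} χ(θ)^{−d/2} σ_d(dθ) < ∞. Define ϱ(rθ) = (1 + χ(θ) r²/m)^{−(d+m)/2}. Then for every t ∈ (0,1): ∫_{ℝ^d} 𝟙(ϱ(x) > t) dx = (m^{d/2}/d) · ∫_{S^{d−1}} χ(θ)^{−d/2} σ_d(dθ) · (t^{−2/(d+m)} − 1)^{d/2}. In particular, the level set function of ϱ is proportional to that of the rotationally invariant standard multivariate t-density η(x) = (1 + ‖x‖²/m)^{−(d+m)/2}. -/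
open Set MeasureTheory

lemma aux_cond {m t c r : ℝ} {d : ℕ} (hm : 0 < m) (ht : t ∈ Set.Ioo (0:ℝ) 1)
    (hc : 0 < c) :
    (t < (1 + c * r ^ 2 / m) ^ (-(((d:ℝ) + m) / 2))) ↔
      r ^ 2 < m / c * (t ^ (-2 / ((d:ℝ) + m)) - 1) := by
  have hdm : (0:ℝ) < (d:ℝ) + m := by positivity
  have he : (0:ℝ) < ((d:ℝ) + m) / 2 := by positivity
  have hb : (0:ℝ) < 1 + c * r ^ 2 / m := by positivity
  have hT : (t:ℝ) ^ (-2 / ((d:ℝ) + m)) = (t⁻¹) ^ (((d:ℝ) + m) / 2)⁻¹ := by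
    rw [Real.inv_rpow ht.1.le, ← Real.rpow_neg ht.1.le]
    congr 1
    rw [inv_div]
    ring
  rw [Real.rpow_neg hb.le, lt_inv_comm₀ ht.1 (Real.rpow_pos_of_pos hb _),
    ← Real.lt_rpow_inv_iff_of_pos hb.le (inv_nonneg.mpr ht.1.le) he, ← hT]
  constructor
  · intro h
    have h3 : c * r ^ 2 / m < t ^ (-2 / ((d:ℝ) + m)) - 1 := by linarith
    have h4 : c * r ^ 2 < (t ^ (-2 / ((d:ℝ) + m)) - 1) * m := (div_lt_iff₀ hm).mp h3
    have h5 : r ^ 2 * c < m * (t ^ (-2 / ((d:ℝ) + m)) - 1) := by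
      linarith [mul_comm c (r ^ 2)]
    have := (lt_div_iff₀ hc).mpr h5
    linarith [this, (show m * (t ^ (-2 / ((d:ℝ) + m)) - 1) / c
      = m / c * (t ^ (-2 / ((d:ℝ) + m)) - 1) by ring)]
  · intro h
    have h5 : r ^ 2 * c < m * (t ^ (-2 / ((d:ℝ) + m)) - 1) := by
      have := (lt_div_iff₀ hc).mp (by
        rwa [show m * (t ^ (-2 / ((d:ℝ) + m)) - 1) / c
          = m / c * (t ^ (-2 / ((d:ℝ) + m)) - 1) by ring])
      exact this
    have h4 : c * r ^ 2 < (t ^ (-2 / ((d:ℝ) + m)) - 1) * m := by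
      linarith [mul_comm c (r ^ 2)]
    have h3 : c * r ^ 2 / m < t ^ (-2 / ((d:ℝ) + m)) - 1 := (div_lt_iff₀ hm).mpr h4
    linarith

lemma aux_key (d : ℕ) (hd : 0 < d) (m : ℝ) (hm : 0 < m)
    (σ : Measure (Metric.sphere (0 : EuclideanSpace ℝ (Fin d)) 1))
    (hpolar : ∀ g : EuclideanSpace ℝ (Fin d) → ENNReal, Measurable g →
      ∫⁻ x, g x = ∫⁻ θ : Metric.sphere (0 : EuclideanSpace ℝ (Fin d)) 1,
        ∫⁻ r in Set.Ioi (0:ℝ),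
          g (r • (θ : EuclideanSpace ℝ (Fin d))) * ENNReal.ofReal (r ^ ((d:ℝ) - 1))
          ∂volume ∂σ)
    (ψ : EuclideanSpace ℝ (Fin d) → ℝ) (hψm : Measurable ψ)
    (hψpos : ∀ θ ∈ Metric.sphere (0 : EuclideanSpace ℝ (Fin d)) 1, 0 < ψ θ)
    (t : ℝ) (ht : t ∈ Set.Ioo (0:ℝ) 1) :
    volume {x : EuclideanSpace ℝ (Fin d) |
        (1 + ψ (‖x‖⁻¹ • x) * ‖x‖ ^ 2 / m) ^ (-(((d:ℝ) + m) / 2)) > t} =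
      ∫⁻ θ : Metric.sphere (0 : EuclideanSpace ℝ (Fin d)) 1,
        ENNReal.ofReal ((m / ψ (θ : EuclideanSpace ℝ (Fin d))
          * (t ^ (-2 / ((d:ℝ) + m)) - 1)) ^ ((d:ℝ)/2) / d) ∂σ := by
  have hd1 : (-1:ℝ) < (d:ℝ) - 1 := by
    have : (1:ℝ) ≤ d := by exact_mod_cast hd
    linarith
  set S := {x : EuclideanSpace ℝ (Fin d) |
      (1 + ψ (‖x‖⁻¹ • x) * ‖x‖ ^ 2 / m) ^ (-(((d:ℝ) + m) / 2)) > t} with hSdef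
  have hmeasS : MeasurableSet S := by
    have hmf : Measurable fun x : EuclideanSpace ℝ (Fin d) =>
        (1 + ψ (‖x‖⁻¹ • x) * ‖x‖ ^ 2 / m) ^ (-(((d:ℝ) + m) / 2)) := by fun_prop
    exact measurableSet_lt measurable_const hmf
  have hg : Measurable (S.indicator (1 : EuclideanSpace ℝ (Fin d) → ENNReal)) :=
    measurable_one.indicator hmeasS
  rw [← lintegral_indicator_one hmeasS, hpolar _ hg]
  refine lintegral_congr fun θ => ?_
  have hθ : ‖(θ : EuclideanSpace ℝ (Fin d))‖ = 1 := norm_eq_of_mem_sphere θ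
  have hψθ : 0 < ψ (θ : EuclideanSpace ℝ (Fin d)) := hψpos _ θ.2
  have hApos : 0 < t ^ (-2 / ((d:ℝ) + m)) - 1 := by
    have h1 : 1 < t ^ (-2 / ((d:ℝ) + m)) := by
      refine (Real.one_lt_rpow_iff_of_pos ht.1).mpr (Or.inr ⟨ht.2, ?_⟩)
      have hdm : (0:ℝ) < (d:ℝ) + m := by positivity
      rw [neg_div]
      exact neg_lt_zero.mpr (by positivity)
    linarith
  set A := t ^ (-2 / ((d:ℝ) + m)) - 1 with hA
  set R := Real.sqrt (m / ψ (θ : EuclideanSpace ℝ (Fin d)) * A) with hR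
  have hRpos : 0 < R := Real.sqrt_pos.mpr (by positivity)
  have hcong : ∀ r ∈ Ioi (0:ℝ),
      S.indicator (1 : EuclideanSpace ℝ (Fin d) → ENNReal)
          (r • (θ : EuclideanSpace ℝ (Fin d))) * ENNReal.ofReal (r ^ ((d:ℝ)-1))
        = (Ioo 0 R).indicator (fun r => ENNReal.ofReal (r ^ ((d:ℝ)-1))) r := by
    intro r hr
    have hr0 : 0 < r := hr
    have hn : ‖r • (θ : EuclideanSpace ℝ (Fin d))‖ = r := by
      rw [norm_smul, hθ, Real.norm_eq_abs, abs_of_pos hr0, mul_one]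
    have hnorml : (‖r • (θ : EuclideanSpace ℝ (Fin d))‖)⁻¹ • (r • (θ : EuclideanSpace ℝ (Fin d)))
        = (θ : EuclideanSpace ℝ (Fin d)) := by
      rw [hn, smul_smul, inv_mul_cancel₀ hr0.ne', one_smul]
    have hmem : (r • (θ : EuclideanSpace ℝ (Fin d))) ∈ S ↔ r < R := by
      rw [hSdef, mem_setOf_eq, gt_iff_lt, hnorml, hn, aux_cond hm ht hψθ, hR,
        ← Real.lt_sqrt hr0.le]
    rw [Set.indicator_apply, Set.indicator_apply]
    by_cases h : r < R
    · rw [if_pos (hmem.mpr h), if_pos (show r ∈ Ioo 0 R from ⟨hr0, h⟩), Pi.one_apply, one_mul]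
    · rw [if_neg (fun hh => h (hmem.mp hh)), if_neg (fun hh => h (mem_Ioo.mp hh).2), zero_mul]
  rw [setLIntegral_congr_fun measurableSet_Ioi hcong,
    lintegral_indicator measurableSet_Ioo, Measure.restrict_restrict measurableSet_Ioo,
    inter_eq_left.mpr (show Ioo (0:ℝ) R ⊆ Ioi 0 from fun r hr => hr.1)]
  have hint : IntegrableOn (fun r : ℝ => r ^ ((d:ℝ)-1)) (Ioo 0 R) := by
    have h2 := intervalIntegral.intervalIntegrable_rpow' (a := 0) (b := R) hd1
    rw [intervalIntegrable_iff_integrableOn_Ioc_of_le hRpos.le] at h2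
    exact h2.mono_set Ioo_subset_Ioc_self
  rw [← ofReal_integral_eq_lintegral_ofReal hint (by
    filter_upwards [ae_restrict_mem measurableSet_Ioo] with r hr
    exact Real.rpow_nonneg hr.1.le _)]
  congr 1
  rw [← integral_Ioc_eq_integral_Ioo, ← intervalIntegral.integral_of_le hRpos.le,
    integral_rpow (Or.inl hd1)]
  rw [show (d:ℝ) - 1 + 1 = (d:ℝ) by ring,
    Real.zero_rpow (by exact_mod_cast hd.ne' : (d:ℝ) ≠ 0), sub_zero, hR,
    Real.sqrt_eq_rpow, ← Real.rpow_mul (by positivity)]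
  rw [show 1 / 2 * (d:ℝ) = (d:ℝ) / 2 by ring]

theorem stmt_18 (d : ℕ) (hd : 0 < d) (m : ℝ) (hm : 2 < m)
    (σ : Measure (Metric.sphere (0 : EuclideanSpace ℝ (Fin d)) 1))
    (χ : EuclideanSpace ℝ (Fin d) → ℝ)
    (hχmeas : Measurable χ)
    (hχpos : ∀ θ ∈ Metric.sphere (0 : EuclideanSpace ℝ (Fin d)) 1, 0 < χ θ)
    (hχint : Integrable (fun θ : Metric.sphere (0 : EuclideanSpace ℝ (Fin d)) 1 =>
      (χ (θ : EuclideanSpace ℝ (Fin d))) ^ (-((d:ℝ) / 2))) σ)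
    (hpolar : ∀ g : EuclideanSpace ℝ (Fin d) → ENNReal, Measurable g →
      ∫⁻ x, g x = ∫⁻ θ : Metric.sphere (0 : EuclideanSpace ℝ (Fin d)) 1,
        ∫⁻ r in Set.Ioi (0:ℝ),
          g (r • (θ : EuclideanSpace ℝ (Fin d))) * ENNReal.ofReal (r ^ ((d:ℝ) - 1))
          ∂volume ∂σ)
    (ϱ : EuclideanSpace ℝ (Fin d) → ℝ)
    (hϱ : ∀ x : EuclideanSpace ℝ (Fin d),
      ϱ x = (1 + χ (‖x‖⁻¹ • x) * ‖x‖ ^ 2 / m) ^ (-(((d:ℝ) + m) / 2))) :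
    (∀ t ∈ Set.Ioo (0:ℝ) 1,
      volume {x : EuclideanSpace ℝ (Fin d) | ϱ x > t} =
        ENNReal.ofReal ((m ^ ((d:ℝ) / 2) / d)
          * (∫ θ : Metric.sphere (0 : EuclideanSpace ℝ (Fin d)) 1,
              (χ (θ : EuclideanSpace ℝ (Fin d))) ^ (-((d:ℝ) / 2)) ∂σ)
          * (t ^ (-2 / ((d:ℝ) + m)) - 1) ^ ((d:ℝ) / 2))) ∧
    (∃ c : ℝ, 0 < c ∧ ∀ t ∈ Set.Ioo (0:ℝ) 1,
      volume {x : EuclideanSpace ℝ (Fin d) | ϱ x > t} =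
        ENNReal.ofReal c * volume {x : EuclideanSpace ℝ (Fin d) |
          (1 + ‖x‖ ^ 2 / m) ^ (-(((d:ℝ) + m) / 2)) > t}) := by
  have hm0 : (0:ℝ) < m := by linarith
  have hApos : ∀ t ∈ Set.Ioo (0:ℝ) 1, 0 < t ^ (-2 / ((d:ℝ) + m)) - 1 := by
    intro t ht
    have h1 : 1 < t ^ (-2 / ((d:ℝ) + m)) := by
      refine (Real.one_lt_rpow_iff_of_pos ht.1).mpr (Or.inr ⟨ht.2, ?_⟩)
      have hdm : (0:ℝ) < (d:ℝ) + m := by positivity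
      rw [neg_div]
      exact neg_lt_zero.mpr (by positivity)
    linarith
  set I := ∫ θ : Metric.sphere (0 : EuclideanSpace ℝ (Fin d)) 1,
      (χ (θ : EuclideanSpace ℝ (Fin d))) ^ (-((d:ℝ) / 2)) ∂σ with hI
  have part1 : ∀ t ∈ Set.Ioo (0:ℝ) 1,
      volume {x : EuclideanSpace ℝ (Fin d) | ϱ x > t} =
        ENNReal.ofReal ((m ^ ((d:ℝ) / 2) / d) * I
          * (t ^ (-2 / ((d:ℝ) + m)) - 1) ^ ((d:ℝ) / 2)) := by
    intro t ht
    have hA := hApos t ht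
    have hset : {x : EuclideanSpace ℝ (Fin d) | ϱ x > t}
        = {x : EuclideanSpace ℝ (Fin d) |
            (1 + χ (‖x‖⁻¹ • x) * ‖x‖ ^ 2 / m) ^ (-(((d:ℝ) + m) / 2)) > t} := by
      ext x
      rw [mem_setOf_eq, mem_setOf_eq, hϱ x]
    rw [hset, aux_key d hd m hm0 σ hpolar χ hχmeas hχpos t ht]
    have hpt : ∀ θ : Metric.sphere (0 : EuclideanSpace ℝ (Fin d)) 1,
        ENNReal.ofReal ((m / χ (θ : EuclideanSpace ℝ (Fin d))
            * (t ^ (-2 / ((d:ℝ) + m)) - 1)) ^ ((d:ℝ)/2) / d)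
          = ENNReal.ofReal (m ^ ((d:ℝ)/2) * (t ^ (-2 / ((d:ℝ) + m)) - 1) ^ ((d:ℝ)/2) / d)
            * ENNReal.ofReal ((χ (θ : EuclideanSpace ℝ (Fin d))) ^ (-((d:ℝ) / 2))) := by
      intro θ
      have hχθ : 0 < χ (θ : EuclideanSpace ℝ (Fin d)) := hχpos _ θ.2
      rw [← ENNReal.ofReal_mul (by positivity)]
      congr 1
      rw [Real.mul_rpow (by positivity) hA.le, Real.div_rpow hm0.le hχθ.le,
        Real.rpow_neg hχθ.le]
      have hne : (χ (θ : EuclideanSpace ℝ (Fin d))) ^ ((d:ℝ)/2) ≠ 0 :=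
        (Real.rpow_pos_of_pos hχθ _).ne'
      field_simp
    rw [lintegral_congr hpt, lintegral_const_mul' _ _ ENNReal.ofReal_ne_top,
      ← ofReal_integral_eq_lintegral_ofReal hχint
        (Filter.Eventually.of_forall fun θ => Real.rpow_nonneg (hχpos _ θ.2).le _),
      ← hI, ← ENNReal.ofReal_mul (by positivity)]
    congr 1
    ring
  refine ⟨part1, ?_⟩
  have hη : ∀ t ∈ Set.Ioo (0:ℝ) 1,
      volume {x : EuclideanSpace ℝ (Fin d) |
          (1 + ‖x‖ ^ 2 / m) ^ (-(((d:ℝ) + m) / 2)) > t}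
        = ENNReal.ofReal ((m * (t ^ (-2 / ((d:ℝ) + m)) - 1)) ^ ((d:ℝ)/2) / d)
            * σ Set.univ := by
    intro t ht
    have hseteq : {x : EuclideanSpace ℝ (Fin d) |
          (1 + ‖x‖ ^ 2 / m) ^ (-(((d:ℝ) + m) / 2)) > t}
        = {x : EuclideanSpace ℝ (Fin d) |
            (1 + (fun _ : EuclideanSpace ℝ (Fin d) => (1:ℝ)) (‖x‖⁻¹ • x) * ‖x‖ ^ 2 / m)
              ^ (-(((d:ℝ) + m) / 2)) > t} := by
      ext x; simp
    rw [hseteq, aux_key d hd m hm0 σ hpolar (fun _ => 1) measurable_const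
      (fun _ _ => one_pos) t ht]
    simp only [div_one]
    exact lintegral_const _
  -- the η-level set is a ball, so it has positive finite volume
  have hball : {x : EuclideanSpace ℝ (Fin d) |
        (1 + ‖x‖ ^ 2 / m) ^ (-(((d:ℝ) + m) / 2)) > (1/2 : ℝ)}
      = Metric.ball 0 (Real.sqrt (m * ((1/2:ℝ) ^ (-2 / ((d:ℝ) + m)) - 1))) := by
    ext x
    rw [mem_setOf_eq, mem_ball_zero_iff, gt_iff_lt,
      show (1:ℝ) + ‖x‖ ^ 2 / m = 1 + 1 * ‖x‖ ^ 2 / m by ring,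
      aux_cond hm0 ⟨by norm_num, by norm_num⟩ one_pos, div_one,
      ← Real.lt_sqrt (norm_nonneg x)]
  have hhalf := hη (1/2) ⟨by norm_num, by norm_num⟩
  rw [hball] at hhalf
  have hAhalf : 0 < (1/2:ℝ) ^ (-2 / ((d:ℝ) + m)) - 1 := hApos _ ⟨by norm_num, by norm_num⟩
  have hRpos : 0 < Real.sqrt (m * ((1/2:ℝ) ^ (-2 / ((d:ℝ) + m)) - 1)) :=
    Real.sqrt_pos.mpr (by positivity)
  have hballpos : volume (Metric.ball (0 : EuclideanSpace ℝ (Fin d))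
      (Real.sqrt (m * ((1/2:ℝ) ^ (-2 / ((d:ℝ) + m)) - 1)))) ≠ 0 :=
    (Metric.measure_ball_pos volume _ hRpos).ne'
  have hballfin : volume (Metric.ball (0 : EuclideanSpace ℝ (Fin d))
      (Real.sqrt (m * ((1/2:ℝ) ^ (-2 / ((d:ℝ) + m)) - 1)))) ≠ ⊤ :=
    (measure_ball_lt_top).ne
  have hcoefpos : 0 < (m * ((1/2:ℝ) ^ (-2 / ((d:ℝ) + m)) - 1)) ^ ((d:ℝ)/2) / d := by
    have : (0:ℝ) < d := by exact_mod_cast hd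
    positivity
  have hKne0 : σ Set.univ ≠ 0 := by
    intro h
    rw [h, mul_zero] at hhalf
    exact hballpos hhalf
  have hKfin : σ Set.univ ≠ ⊤ := by
    intro h
    rw [h, ENNReal.mul_top (by
      simp only [ne_eq, ENNReal.ofReal_eq_zero, not_le]
      exact hcoefpos)] at hhalf
    exact hballfin hhalf
  have hKpos : 0 < (σ Set.univ).toReal := ENNReal.toReal_pos hKne0 hKfin
  have hIpos : 0 < I := by
    rw [hI, integral_pos_iff_support_of_nonneg_ae
      (Filter.Eventually.of_forall fun θ => Real.rpow_nonneg (hχpos _ θ.2).le _) hχint]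
    rw [Set.eq_univ_of_forall (fun θ => Function.mem_support.mpr
      (Real.rpow_pos_of_pos (hχpos _ θ.2) _).ne')]
    exact pos_iff_ne_zero.mpr hKne0
  refine ⟨I / (σ Set.univ).toReal, div_pos hIpos hKpos, ?_⟩
  intro t ht
  have hA := hApos t ht
  rw [part1 t ht, hη t ht, ← ENNReal.ofReal_toReal hKfin, ← mul_assoc,
    ← ENNReal.ofReal_mul (by positivity), ← ENNReal.ofReal_mul (by positivity)]
  congr 1
  rw [Real.mul_rpow hm0.le hA.le]
  simp only [ENNReal.toReal_ofReal hKpos.le]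
  field_simp
end
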